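/- In any labelled transition system with a sel function on labels, if s is a transition sequence of a parallel composition P | Q obtained by the paper's decomposition (Lemma: parallel traces), then the selected labels satisfy sel(α) = sel(β) ∪ sel(δ), where α is the label trace of s and β, δ are the label traces of the component transition sequences of P and Q. Concretely: for any transition sequence s of P | Q in the session calculus, there exist transition sequences p of P and q of Q and monotone surjective index maps u, v from the index set of s onto those of p and q, such that the i-th state of s is P_{u(i)} | Q_{v(i)} and sel(β) ∪ sel(δ) = sel(α). -/

import Mathlib

/-- Polarised channel names. -/
structure Chan where
  name : ℕ
  pol : Bool
deriving DecidableEq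

/-- The dual end of a polarised channel. -/
def Chan.dual (k : Chan) : Chan := ⟨k.name, !k.pol⟩

/-- Data expressions: values (natural numbers, with `0`/`≠ 0` read as the
booleans) and data variables. -/
inductive Expr where
  | val : ℕ → Expr
  | var : ℕ → Expr
deriving DecidableEq

/-- Substitution of a value for a data variable in an expression. -/
def Expr.subst (e : Expr) (x v : ℕ) : Expr :=
  match e with
  | .val w => .val w
  | .var y => if y = x then .val v else .var y

/-- Evaluation of expressions: `e ⇓ v`. -/
inductive EvalE : Expr → ℕ → Prop where
  | val {v} : EvalE (.val v) v

/-- Processes of the session calculus with responses. -/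
inductive Proc where
  | nil : Proc
  | send : Chan → Expr → Proc → Proc
  | recv : Chan → ℕ → Proc → Proc
  | sel : Chan → ℕ → Proc → Proc
  | bra : Chan → List (ℕ × Proc) → Proc
  | par : Proc → Proc → Proc
  | recp : ℕ → Proc → Proc
  | recn : ℕ → ℕ → Expr → Proc → Proc → Proc
  | pvar : ℕ → List Chan → Proc
  | cond : Expr → Proc → Proc → Proc

/-- Free polarised channel names of a process. -/
def Proc.fn : Proc → Set Chan
  | .nil => ∅
  | .send k _ P => insert k P.fn
  | .recv k _ P => insert k P.fn
  | .sel k _ P => insert k P.fn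
  | .bra k bs => insert k (⋃ p : {x // x ∈ bs}, Proc.fn p.1.2)
  | .par P Q => P.fn ∪ Q.fn
  | .recp _ P => P.fn
  | .recn _ _ _ P Q => P.fn ∪ Q.fn
  | .pvar _ ks => {k | k ∈ ks}
  | .cond _ P Q => P.fn ∪ Q.fn
decreasing_by
  all_goals simp_wf
  all_goals
    first
      | omega
      | (obtain ⟨⟨l2, Q2⟩, hmem⟩ := p
         have := List.sizeOf_lt_of_mem hmem
         simp at this ⊢
         omega)

/-- Free process variables of a process. -/
def Proc.fpv : Proc → Set ℕ
  | .nil => ∅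
  | .send _ _ P => P.fpv
  | .recv _ _ P => P.fpv
  | .sel _ _ P => P.fpv
  | .bra _ bs => ⋃ p : {x // x ∈ bs}, Proc.fpv p.1.2
  | .par P Q => P.fpv ∪ Q.fpv
  | .recp X P => P.fpv \ {X}
  | .recn X _ _ P Q => (P.fpv \ {X}) ∪ Q.fpv
  | .pvar X _ => {X}
  | .cond _ P Q => P.fpv ∪ Q.fpv
decreasing_by
  all_goals simp_wf
  all_goals
    first
      | omega
      | (obtain ⟨⟨l2, Q2⟩, hmem⟩ := p
         have := List.sizeOf_lt_of_mem hmem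
         simp at this ⊢
         omega)

/-- Substitution of a data value for a data variable in a process. -/
def Proc.substV (P : Proc) (x v : ℕ) : Proc :=
  match P with
  | .nil => .nil
  | .send k e Q => .send k (e.subst x v) (Q.substV x v)
  | .recv k y Q => .recv k y (if y = x then Q else Q.substV x v)
  | .sel k l Q => .sel k l (Q.substV x v)
  | .bra k bs => .bra k (bs.attach.map fun ⟨⟨l, Q⟩, h⟩ => (l, Q.substV x v))
  | .par Q R => .par (Q.substV x v) (R.substV x v)
  | .recp X Q => .recp X (Q.substV x v)
  | .recn X i e Q R =>
      .recn X i (e.subst x v) (if i = x then Q else Q.substV x v) (R.substV x v)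
  | .pvar X ks => .pvar X ks
  | .cond e Q R => .cond (e.subst x v) (Q.substV x v) (R.substV x v)
decreasing_by
  all_goals simp_wf
  all_goals (try (have := List.sizeOf_lt_of_mem h; simp at this; omega))
  all_goals omega

/-- Capture-avoiding substitution of a process for a process variable,
`P{Q/X}` (with `X⟨k̃⟩{Q/X} = Q`). -/
def Proc.substP (P : Proc) (X : ℕ) (Q : Proc) : Proc :=
  match P with
  | .nil => .nil
  | .send k e R => .send k e (R.substP X Q)
  | .recv k y R => .recv k y (R.substP X Q)
  | .sel k l R => .sel k l (R.substP X Q)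
  | .bra k bs => .bra k (bs.attach.map fun ⟨⟨l, R⟩, h⟩ => (l, R.substP X Q))
  | .par R S => .par (R.substP X Q) (S.substP X Q)
  | .recp Y R => if Y = X then .recp Y R else .recp Y (R.substP X Q)
  | .recn Y i e R S =>
      .recn Y i e (if Y = X then R else R.substP X Q) (S.substP X Q)
  | .pvar Y ks => if Y = X then Q else .pvar Y ks
  | .cond e R S => .cond e (R.substP X Q) (S.substP X Q)
decreasing_by
  all_goals simp_wf
  all_goals (try (have := List.sizeOf_lt_of_mem h; simp at this; omega))
  all_goals omega

/-- Process transition labels: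
`k!v`, `k?v`, `k⊕l`, `k&l`, `τ`, `τ:l`. -/
inductive PLabel where
  | out : Chan → ℕ → PLabel
  | inp : Chan → ℕ → PLabel
  | sel : Chan → ℕ → PLabel
  | bra : Chan → ℕ → PLabel
  | tau : PLabel
  | tauL : ℕ → PLabel

/-- The subject of a process transition label (`τ` labels have no channel
subject). -/
def PLabel.subj : PLabel → Option Chan
  | .out k _ => some k
  | .inp k _ => some k
  | .sel k _ => some k
  | .bra k _ => some k
  | .tau => none
  | .tauL _ => none

/-- The labelled transition semantics of processes (Figure 1 of the paper),
including the symmetric versions of ParL and Com1/Com2. -/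
inductive PStep : Proc → PLabel → Proc → Prop where
  | out {k e v P} : EvalE e v → k.dual ∉ P.fn →
      PStep (.send k e P) (.out k v) P
  | inp {k x v P} : k.dual ∉ P.fn →
      PStep (.recv k x P) (.inp k v) (P.substV x v)
  | sel {k l P} : k.dual ∉ P.fn →
      PStep (.sel k l P) (.sel k l) P
  | bra {k bs l P} : (l, P) ∈ bs → k.dual ∉ P.fn →
      PStep (.bra k bs) (.bra k l) P
  | parL {P lbl Q P'} : PStep P lbl P' →
      (∀ k, lbl.subj = some k → k.dual ∉ Q.fn) →
      PStep (.par P Q) lbl (.par P' Q)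
  | parR {P lbl Q Q'} : PStep Q lbl Q' →
      (∀ k, lbl.subj = some k → k.dual ∉ P.fn) →
      PStep (.par P Q) lbl (.par P Q')
  | com1 {P Q P' Q' k v} : PStep P (.out k.dual v) P' → PStep Q (.inp k v) Q' →
      PStep (.par P Q) .tau (.par P' Q')
  | com1' {P Q P' Q' k v} : PStep P (.inp k v) P' → PStep Q (.out k.dual v) Q' →
      PStep (.par P Q) .tau (.par P' Q')
  | com2 {P Q P' Q' k l} : PStep P (.sel k.dual l) P' → PStep Q (.bra k l) Q' →
      PStep (.par P Q) (.tauL l) (.par P' Q')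
  | com2' {P Q P' Q' k l} : PStep P (.bra k l) P' → PStep Q (.sel k.dual l) Q' →
      PStep (.par P Q) (.tauL l) (.par P' Q')
  | recp {X P lbl Q} : PStep (P.substP X (.recp X P)) lbl Q →
      PStep (.recp X P) lbl Q
  | prec0 {X i e P Q lbl R} : EvalE e 0 → PStep Q lbl R →
      PStep (.recn X i e P Q) lbl R
  | precN {X i e n P Q lbl R} : EvalE e (n + 1) →
      PStep ((P.substV i n).substP X (.recn X i (.val n) P Q)) lbl R →
      PStep (.recn X i e P Q) lbl R
  | condT {e v P Q lbl P'} : EvalE e v → v ≠ 0 → PStep P lbl P' →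
      PStep (.cond e P Q) lbl P'
  | condF {e P Q lbl Q'} : EvalE e 0 → PStep Q lbl Q' →
      PStep (.cond e P Q) lbl Q'

/-- Session types with responses. -/
inductive RType where
  | end_ : RType
  | send : RType → RType
  | recv : RType → RType
  | branch : List (ℕ × Set ℕ × RType) → RType
  | select : List (ℕ × Set ℕ × RType) → RType

/-- A session typing environment: a partial map from polarised channel names
to session types with responses. -/
def SEnv := Chan → Option RType

/-- The singleton environment `k : T`. -/
def SEnv.single (k : Chan) (T : RType) : SEnv :=
  fun k' => if k' = k then some T else none

/-- Union `Δ, Δ'` of environments (intended for disjoint domains). -/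
def SEnv.union (Δ Δ' : SEnv) : SEnv :=
  fun k => (Δ k).orElse (fun _ => Δ' k)

/-- Disjointness of environment domains. -/
def SEnv.Disj (Δ Δ' : SEnv) : Prop := ∀ k, Δ k = none ∨ Δ' k = none

/-- The domain of an environment. -/
def SEnv.dom (Δ : SEnv) : Set Chan := {k | Δ k ≠ none}

/-- An environment is completed when every type in it is `end`. -/
def SEnv.Completed (Δ : SEnv) : Prop :=
  ∀ k T, Δ k = some T → T = RType.end_

/-- Information recorded for a process variable by the liveness typing
system: `(A, I, Δ)` (accumulated selections, invariant, session environment)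
for general recursion, or `(L, Δ)` for primitive recursion. -/
inductive PVInfo where
  | gen : Set ℕ → Set ℕ → SEnv → PVInfo
  | prim : Set ℕ → SEnv → PVInfo

/-- Process variable environments `Γ`. -/
def PEnv := ℕ → Option PVInfo

/-- `Γ + l`: add the selected label `l` to every accumulator in `Γ`. -/
def PEnv.addAcc (Γ : PEnv) (l : ℕ) : PEnv :=
  fun X => match Γ X with
    | some (.gen A I Δ) => some (.gen (A ∪ {l}) I Δ)
    | o => o

/-- `Γ, X : t` (extension/update of a process variable environment). -/
def PEnv.update (Γ : PEnv) (X : ℕ) (t : PVInfo) : PEnv :=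
  fun Y => if Y = X then some t else Γ Y

/-- The empty process variable environment. -/
def PEnv.empty : PEnv := fun _ => none

/-- The liveness typing system `Γ; L ⊢ P ▹ Δ` (Figure 4 of the paper). -/
inductive Typed : PEnv → Set ℕ → Proc → SEnv → Prop where
  | inact {Γ Δ} : SEnv.Completed Δ → Typed Γ ∅ .nil Δ
  | out {Γ L k e P Δ T} : Δ k = none →
      Typed Γ L P (SEnv.union Δ (SEnv.single k T)) →
      Typed Γ L (.send k e P) (SEnv.union Δ (SEnv.single k (.send T)))
  | inp {Γ L k x P Δ T} : Δ k = none →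
      Typed Γ L P (SEnv.union Δ (SEnv.single k T)) →
      Typed Γ L (.recv k x P) (SEnv.union Δ (SEnv.single k (.recv T)))
  | bra {Γ : PEnv} {L : Set ℕ} {k : Chan} {bs : List (ℕ × Proc)}
      {ts : List (ℕ × Set ℕ × RType)} {Δ : SEnv} : Δ k = none → bs.length = ts.length →
      (∀ (i : ℕ) (l : ℕ) (P : Proc) (l' : ℕ) (L' : Set ℕ) (T : RType),
        bs[i]? = some (l, P) → ts[i]? = some (l', L', T) → l = l') →
      (∀ (i : ℕ) (l : ℕ) (P : Proc) (l' : ℕ) (L' : Set ℕ) (T : RType),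
        bs[i]? = some (l, P) → ts[i]? = some (l', L', T) →
        Typed (Γ.addAcc l) ((L \ {l}) ∪ L') P (SEnv.union Δ (SEnv.single k T))) →
      Typed Γ L (.bra k bs) (SEnv.union Δ (SEnv.single k (.branch ts)))
  | sel {Γ L k l P Δ ts Ll T} : Δ k = none → (l, Ll, T) ∈ ts →
      Typed (Γ.addAcc l) ((L \ {l}) ∪ Ll) P (SEnv.union Δ (SEnv.single k T)) →
      Typed Γ L (.sel k l P) (SEnv.union Δ (SEnv.single k (.select ts)))
  | par {Γ L₁ L₂ P Q Δ₁ Δ₂} : SEnv.Disj Δ₁ Δ₂ →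
      Typed Γ L₁ P Δ₁ → Typed Γ L₂ Q Δ₂ →
      Typed Γ (L₁ ∪ L₂) (.par P Q) (SEnv.union Δ₁ Δ₂)
  | varG {Γ X A I Δ L ks} : Γ X = some (.gen A I Δ) → L ⊆ I → I ⊆ A →
      SEnv.dom Δ = {k | k ∈ ks} →
      Typed Γ L (.pvar X ks) Δ
  | varP {Γ X L' Δ L ks} : Γ X = some (.prim L' Δ) → L ⊆ L' →
      SEnv.dom Δ = {k | k ∈ ks} →
      Typed Γ L (.pvar X ks) Δ
  | recp {Γ X I P Δ L} : Typed (Γ.update X (.gen ∅ I Δ)) I P Δ → L ⊆ I →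
      Typed Γ L (.recp X P) Δ
  | recn {Γ X i e P Q Δ L L'} :
      Typed (Γ.update X (.prim L' Δ)) L' P Δ →
      Typed Γ L' Q Δ → L ⊆ L' →
      Typed Γ L (.recn X i e P Q) Δ
  | cond {Γ L e P Q Δ} : Typed Γ L P Δ → Typed Γ L Q Δ →
      Typed Γ L (.cond e P Q) Δ

/-- The labels selected by a process transition label:
`sel(k&l) = sel(k⊕l) = sel(τ:l) = {l}`, and `∅` otherwise. -/
def PLabel.selSet : PLabel → Set ℕ
  | .bra _ l => {l}
  | .sel _ l => {l}
  | .tauL l => {l}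
  | _ => ∅

/-- A finite or infinite transition sequence of processes: `len` transitions
(`len = ⊤` for an infinite sequence), states indexed by `i ≤ len` and labels
by `i < len`. -/
structure TSeq where
  len : ℕ∞
  st : ℕ → Proc
  lab : ℕ → PLabel
  step : ∀ i : ℕ, (i : ℕ∞) < len → PStep (st i) (lab i) (st (i + 1))

/-- `sel(α)` of the label trace of a transition sequence. -/
def TSeq.selTrace (s : TSeq) : Set ℕ :=
  {l | ∃ i : ℕ, (i : ℕ∞) < s.len ∧ l ∈ (s.lab i).selSet}

/-!
A transition of `A | B` is a transition of `A`, of `B`, or of both at once (a synchronisation), and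
its selected labels are those of the component moves. So the two components of `s` are sequences
that at each index either move or stutter, and deleting the stuttering steps yields `p` and `q`.
The index map `u` counts the moves of the left component before `i` (`Nat.count`), and the `n`-th
transition of `p` is the one taken at the `n`-th moving index (`Nat.nth`).
-/

def OptPStep (A : Proc) : Option PLabel → Proc → Prop
  | none, A' => A' = A
  | some a, A' => PStep A a A'

def optSelSet : Option PLabel → Set ℕ
  | none => ∅
  | some a => a.selSet

theorem PStep.par_inv {A B R : Proc} {a : PLabel} (h : PStep (.par A B) a R) :
    ∃ A' B' oA oB, R = .par A' B' ∧ OptPStep A oA A' ∧ OptPStep B oB B' ∧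
      optSelSet oA ∪ optSelSet oB = a.selSet := by
  cases h with
  | parL h _ => exact ⟨_, _, some _, none, rfl, h, rfl, by simp [optSelSet]⟩
  | parR h _ => exact ⟨_, _, none, some _, rfl, rfl, h, by simp [optSelSet]⟩
  | com1 hA hB => exact ⟨_, _, some _, some _, rfl, hA, hB, by simp [optSelSet, PLabel.selSet]⟩
  | com1' hA hB => exact ⟨_, _, some _, some _, rfl, hA, hB, by simp [optSelSet, PLabel.selSet]⟩
  | com2 hA hB => exact ⟨_, _, some _, some _, rfl, hA, hB, by simp [optSelSet, PLabel.selSet]⟩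
  | com2' hA hB => exact ⟨_, _, some _, some _, rfl, hA, hB, by simp [optSelSet, PLabel.selSet]⟩

theorem Nat.lt_card_of_lt_count {p : ℕ → Prop} [DecidablePred p] {k n : ℕ}
    (h : k < Nat.count p n) : ∀ hf : (Set.ofPred p).Finite, k < hf.toFinset.card :=
  fun hf => h.trans_le (Nat.count_le_card hf n)

section Compress

variable {len : ℕ∞} {c : ℕ → Proc} {o : ℕ → Option PLabel}

def IsMove (len : ℕ∞) (o : ℕ → Option PLabel) (i : ℕ) : Prop :=
  (i : ℕ∞) < len ∧ (o i).isSome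

instance : DecidablePred (IsMove len o) := fun _ => inferInstanceAs (Decidable (_ ∧ _))

/-- The index at which a stuttering sequence enters its `n`-th distinct state. -/
noncomputable def entryIdx (len : ℕ∞) (o : ℕ → Option PLabel) : ℕ → ℕ
  | 0 => 0
  | n + 1 => Nat.nth (IsMove len o) n + 1

theorem count_entryIdx {n i : ℕ} (h : n ≤ Nat.count (IsMove len o) i) :
    Nat.count (IsMove len o) (entryIdx len o n) = n ∧ entryIdx len o n ≤ i := by
  cases n with
  | zero => simp [entryIdx]
  | succ k =>
    exact ⟨Nat.count_nth_succ (Nat.lt_card_of_lt_count h), Nat.nth_lt_of_lt_count h⟩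

theorem isMove_nth_of_lt_count {k i : ℕ} (h : k < Nat.count (IsMove len o) i) :
    IsMove len o (Nat.nth (IsMove len o) k) :=
  Nat.nth_mem _ (Nat.lt_card_of_lt_count h)

variable (hstep : ∀ i : ℕ, (i : ℕ∞) < len → OptPStep (c i) (o i) (c (i + 1)))
include hstep

theorem eq_of_count_isMove_eq {i j : ℕ} (hij : i ≤ j) (hj : (j : ℕ∞) ≤ len)
    (hcount : Nat.count (IsMove len o) i = Nat.count (IsMove len o) j) : c i = c j := by
  induction j, hij using Nat.le_induction with
  | base => rfl
  | succ j hij ih =>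
    have hjlen : (j : ℕ∞) < len := lt_of_lt_of_le (Nat.cast_lt.mpr j.lt_succ_self) hj
    have hmono := Nat.count_monotone (IsMove len o) (Nat.le_succ j)
    have hle := Nat.count_monotone (IsMove len o) hij
    have hstay : ¬ IsMove len o j :=
      Nat.count_succ_eq_count_iff.mp (le_antisymm (hcount.symm.trans_le hle) hmono)
    have hnone : o j = none := by simpa [IsMove, hjlen] using hstay
    have hc : c (j + 1) = c j := by simpa [OptPStep, hnone] using hstep j hjlen
    rw [hc, ih hjlen.le (le_antisymm hle (hmono.trans hcount.ge))]

theorem c_entryIdx_count {i : ℕ} (hi : (i : ℕ∞) ≤ len) :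
    c (entryIdx len o (Nat.count (IsMove len o) i)) = c i :=
  have h := count_entryIdx (le_refl (Nat.count (IsMove len o) i))
  eq_of_count_isMove_eq hstep h.2 hi h.1

theorem step_entryIdx {n i : ℕ} (h : n < Nat.count (IsMove len o) i) :
    PStep (c (entryIdx len o n)) ((o (Nat.nth (IsMove len o) n)).getD .tau)
      (c (entryIdx len o (n + 1))) := by
  obtain ⟨hlen, hsome⟩ := isMove_nth_of_lt_count h
  obtain ⟨a, ha⟩ := Option.isSome_iff_exists.mp hsome
  have hentry : c (entryIdx len o n) = c (Nat.nth (IsMove len o) n) := by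
    rw [← c_entryIdx_count hstep hlen.le, Nat.count_nth (Nat.lt_card_of_lt_count h)]
  rw [hentry, ha]
  simpa [OptPStep, ha, entryIdx] using hstep _ hlen

noncomputable def TSeq.compress : TSeq where
  len := ⨆ i, (Nat.count (IsMove len o) i : ℕ∞)
  st n := c (entryIdx len o n)
  lab n := (o (Nat.nth (IsMove len o) n)).getD .tau
  step n hn := by
    obtain ⟨i, hi⟩ := lt_iSup_iff.mp hn
    exact step_entryIdx hstep (by exact_mod_cast hi)

theorem TSeq.compress_st_zero : (TSeq.compress hstep).st 0 = c 0 := rfl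

theorem TSeq.compress_st_count {i : ℕ} (hi : (i : ℕ∞) ≤ len) :
    (TSeq.compress hstep).st (Nat.count (IsMove len o) i) = c i :=
  c_entryIdx_count hstep hi

theorem TSeq.count_le_compress_len (i : ℕ) :
    (Nat.count (IsMove len o) i : ℕ∞) ≤ (TSeq.compress hstep).len :=
  le_iSup (fun i => (Nat.count (IsMove len o) i : ℕ∞)) i

theorem TSeq.exists_count_eq_of_le_compress_len {j : ℕ}
    (hj : (j : ℕ∞) ≤ (TSeq.compress hstep).len) :
    ∃ i : ℕ, (i : ℕ∞) ≤ len ∧ Nat.count (IsMove len o) i = j := by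
  cases j with
  | zero => exact ⟨0, by simp, Nat.count_zero _⟩
  | succ k =>
    obtain ⟨m, hm⟩ := lt_iSup_iff.mp (lt_of_lt_of_le (Nat.cast_lt.mpr k.lt_succ_self) hj)
    have hk : k < Nat.count (IsMove len o) m := by exact_mod_cast hm
    refine ⟨Nat.nth (IsMove len o) k + 1, ?_, Nat.count_nth_succ (Nat.lt_card_of_lt_count hk)⟩
    exact_mod_cast Order.add_one_le_of_lt (isMove_nth_of_lt_count hk).1

theorem TSeq.compress_selTrace :
    (TSeq.compress hstep).selTrace = {l | ∃ i : ℕ, (i : ℕ∞) < len ∧ l ∈ optSelSet (o i)} := by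
  ext l
  constructor
  · rintro ⟨n, hn, hl⟩
    obtain ⟨i, hi⟩ := lt_iSup_iff.mp hn
    obtain ⟨hlen, hsome⟩ := isMove_nth_of_lt_count (i := i) (by exact_mod_cast hi)
    obtain ⟨a, ha⟩ := Option.isSome_iff_exists.mp hsome
    refine ⟨_, hlen, ?_⟩
    simpa [TSeq.compress, optSelSet, ha] using hl
  · rintro ⟨i, hi, hl⟩
    cases ha : o i with
    | none => simp [ha, optSelSet] at hl
    | some a =>
      have hmove : IsMove len o i := ⟨hi, by simp [ha]⟩
      refine ⟨Nat.count (IsMove len o) i, ?_, ?_⟩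
      · refine lt_of_lt_of_le ?_ (TSeq.count_le_compress_len hstep (i + 1))
        exact_mod_cast Nat.count_lt_count_succ_iff.mpr hmove
      · simpa [TSeq.compress, Nat.nth_count hmove, ha, optSelSet] using hl

end Compress

def Proc.parLeft : Proc → Proc
  | .par A _ => A
  | _ => .nil

def Proc.parRight : Proc → Proc
  | .par _ B => B
  | _ => .nil

theorem TSeq.st_eq_par_of_st_zero {s : TSeq} {P Q : Proc} (h0 : s.st 0 = .par P Q) :
    ∀ i : ℕ, (i : ℕ∞) ≤ s.len → s.st i = .par (s.st i).parLeft (s.st i).parRight := by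
  intro i
  induction i with
  | zero => intro _; rw [h0]; rfl
  | succ i ih =>
    intro hi
    have hlt : (i : ℕ∞) < s.len := lt_of_lt_of_le (Nat.cast_lt.mpr i.lt_succ_self) hi
    have hstep := s.step i hlt
    rw [ih hlt.le] at hstep
    obtain ⟨A', B', -, -, hpar, -⟩ := hstep.par_inv
    rw [hpar]
    rfl

theorem TSeq.exists_split_of_st_zero {s : TSeq} {P Q : Proc} (h0 : s.st 0 = .par P Q) :
    ∃ oA oB : ℕ → Option PLabel,
      (∀ i : ℕ, (i : ℕ∞) < s.len → OptPStep (s.st i).parLeft (oA i) (s.st (i + 1)).parLeft) ∧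
      (∀ i : ℕ, (i : ℕ∞) < s.len → OptPStep (s.st i).parRight (oB i) (s.st (i + 1)).parRight) ∧
      ∀ i : ℕ, (i : ℕ∞) < s.len → optSelSet (oA i) ∪ optSelSet (oB i) = (s.lab i).selSet := by
  have hsplit : ∀ i : ℕ, ∃ oA oB : Option PLabel, (i : ℕ∞) < s.len →
      OptPStep (s.st i).parLeft oA (s.st (i + 1)).parLeft ∧
      OptPStep (s.st i).parRight oB (s.st (i + 1)).parRight ∧
      optSelSet oA ∪ optSelSet oB = (s.lab i).selSet := by
    intro i
    by_cases hi : (i : ℕ∞) < s.len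
    · have hstep := s.step i hi
      rw [TSeq.st_eq_par_of_st_zero h0 i hi.le] at hstep
      obtain ⟨A', B', oA, oB, hpar, hA, hB, hsel⟩ := hstep.par_inv
      refine ⟨oA, oB, fun _ => ?_⟩
      rw [hpar]
      exact ⟨hA, hB, hsel⟩
    · exact ⟨none, none, fun h => absurd h hi⟩
  choose oA oB h using hsplit
  exact ⟨oA, oB, fun i hi => (h i hi).1, fun i hi => (h i hi).2.1, fun i hi => (h i hi).2.2⟩

/-- Decomposition of transition sequences of a parallel composition: any
transition sequence `s` of `P | Q` arises as a merge of transition sequences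
`p` of `P` and `q` of `Q` along monotone surjective index maps `u, v`, the
`i`-th state of `s` being `P_{u(i)} | Q_{v(i)}`, and the selected labels
satisfy `sel(β) ∪ sel(δ) = sel(α)`. -/
theorem parallel_trace_decomposition (s : TSeq) (P Q : Proc)
    (h0 : s.st 0 = .par P Q) :
    ∃ (p q : TSeq) (u v : ℕ → ℕ),
      p.st 0 = P ∧ q.st 0 = Q ∧
      Monotone u ∧ Monotone v ∧
      (∀ i : ℕ, (i : ℕ∞) ≤ s.len → (u i : ℕ∞) ≤ p.len ∧ (v i : ℕ∞) ≤ q.len) ∧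
      (∀ j : ℕ, (j : ℕ∞) ≤ p.len → ∃ i : ℕ, (i : ℕ∞) ≤ s.len ∧ u i = j) ∧
      (∀ j : ℕ, (j : ℕ∞) ≤ q.len → ∃ i : ℕ, (i : ℕ∞) ≤ s.len ∧ v i = j) ∧
      (∀ i : ℕ, (i : ℕ∞) ≤ s.len → s.st i = .par (p.st (u i)) (q.st (v i))) ∧
      p.selTrace ∪ q.selTrace = s.selTrace := by
  obtain ⟨oA, oB, hA, hB, hsel⟩ := s.exists_split_of_st_zero h0
  refine ⟨TSeq.compress hA, TSeq.compress hB, Nat.count (IsMove s.len oA),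
    Nat.count (IsMove s.len oB), by simp [TSeq.compress_st_zero, h0, Proc.parLeft],
    by simp [TSeq.compress_st_zero, h0, Proc.parRight], Nat.count_monotone _,
    Nat.count_monotone _,
    fun i _ => ⟨TSeq.count_le_compress_len hA i, TSeq.count_le_compress_len hB i⟩,
    fun _ => TSeq.exists_count_eq_of_le_compress_len hA,
    fun _ => TSeq.exists_count_eq_of_le_compress_len hB, fun i hi => ?_, ?_⟩
  · rw [TSeq.compress_st_count hA hi, TSeq.compress_st_count hB hi]
    exact TSeq.st_eq_par_of_st_zero h0 i hi
  · rw [TSeq.compress_selTrace, TSeq.compress_selTrace]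
    ext l
    simp only [TSeq.selTrace, Set.mem_union, Set.mem_ofPred_eq, ← exists_or, ← and_or_left]
    exact exists_congr fun i => and_congr_right fun hi => by
      rw [← Set.mem_union, hsel i hi]
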